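/- For each m with 1 ≤ m ≤ p, the function ξ^{(m)}_{t,s} defined as the determinant of the banded Hessenberg matrix Φ^{(m)}_{t,s} for t > s, as 1 for t = s−m+1, and as 0 for s−p+1 ≤ t ≤ s with t ≠ s−m+1, solves the homogeneous linear difference equation y_t = Σ_{i=1}^p φ_i(t) y_{t−i} for all t > s. -/

import Mathlib

/-- The `k × k` banded lower Hessenberg matrix `Φ^{(m)}_{t,s}` (here `k = t - s`),
0-indexed: superdiagonal entries are `-1`; first-column entries (row `i`, 0-indexed) are
`φ_{i+m}(s+i+1)` when `i + m ≤ p` and `0` otherwise; for columns `j ≥ 1` (0-indexed) the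
`(i,j)` entry is `φ_{i-j+1}(s+i+1)` when `j ≤ i` and `i - j + 1 ≤ p`, and `0` otherwise. -/
def Phi (p : ℕ) (φ : ℕ → ℤ → ℂ) (m : ℕ) (s : ℤ) (k : ℕ) :
    Matrix (Fin k) (Fin k) ℂ :=
  Matrix.of fun i j =>
    if (j : ℕ) = (i : ℕ) + 1 then -1
    else if (j : ℕ) = 0 then
      (if (i : ℕ) + m ≤ p then φ ((i : ℕ) + m) (s + (i : ℕ) + 1) else 0)
    else if (j : ℕ) ≤ (i : ℕ) then
      (if (i : ℕ) - (j : ℕ) + 1 ≤ p then φ ((i : ℕ) - (j : ℕ) + 1) (s + (i : ℕ) + 1)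
        else 0)
    else 0

/-- The fundamental solution `ξ^{(m)}_{t,s}`: the banded Hessenbergian
`det(Φ^{(m)}_{t,s})` for `t > s`; `1` for `t = s - m + 1`; `0` for other
`t ∈ [s - p + 1, s]`. -/
def xi (p : ℕ) (φ : ℕ → ℤ → ℂ) (m : ℕ) (s t : ℤ) : ℂ :=
  if s < t then (Phi p φ m s (t - s).toNat).det
  else if t = s - (m : ℤ) + 1 then 1 else 0

noncomputable def phiEnt (p : ℕ) (φ : ℕ → ℤ → ℂ) (m : ℕ) (s : ℤ) (i j : ℕ) : ℂ :=
    if j = i + 1 then -1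
    else if j = 0 then
      (if i + m ≤ p then φ (i + m) (s + i + 1) else 0)
    else if j ≤ i then
      (if i - j + 1 ≤ p then φ (i - j + 1) (s + i + 1) else 0)
    else 0

lemma Phi_apply (p : ℕ) (φ : ℕ → ℤ → ℂ) (m : ℕ) (s : ℤ) (k : ℕ) (a b : Fin k) :
    Phi p φ m s k a b = phiEnt p φ m s (a : ℕ) (b : ℕ) := rfl

lemma minor_det (p : ℕ) (φ : ℕ → ℤ → ℂ) (m : ℕ) (s : ℤ) :
    ∀ (n : ℕ) (j : Fin (n+1)),
    ((Phi p φ m s (n+1)).submatrix Fin.castSucc j.succAbove).det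
      = (-1:ℂ)^(n - (j:ℕ)) * (Phi p φ m s (j:ℕ)).det := by
  intro n
  induction n with
  | zero =>
    intro j
    have hj : (j : ℕ) = 0 := Nat.lt_one_iff.mp j.isLt
    rw [hj]
    rw [Matrix.det_fin_zero, Matrix.det_fin_zero]
    simp
  | succ n ih =>
    intro j
    by_cases hj : j = Fin.last (n+1)
    · subst hj
      rw [Fin.succAbove_last]
      have hmat : (Phi p φ m s (n+2)).submatrix Fin.castSucc Fin.castSucc
          = Phi p φ m s (n+1) := by
        ext a b
        simp only [Matrix.submatrix_apply, Phi_apply, Fin.coe_castSucc]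
      rw [hmat]
      simp [Fin.val_last]
    · have hjn : (j : ℕ) ≤ n := Nat.lt_succ_iff.mp ((Fin.lt_last_iff_ne_last.mpr hj))
      set M := (Phi p φ m s (n+2)).submatrix Fin.castSucc j.succAbove with hM
      have hcol : j.succAbove (Fin.last n) = Fin.last (n+1) := by
        rw [Fin.succAbove_of_le_castSucc]
        · exact Fin.succ_last n
        · rw [Fin.le_def]
          simpa using hjn
      rw [Matrix.det_succ_column M (Fin.last n)]
      rw [Finset.sum_eq_single_of_mem (Fin.last n) (Finset.mem_univ _)]
      · set j' : Fin (n+1) := j.castPred hj with hj'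
        have hj'v : (j' : ℕ) = (j : ℕ) := Fin.coe_castPred j hj
        have hEntry : M (Fin.last n) (Fin.last n) = -1 := by
          rw [hM]
          rw [Matrix.submatrix_apply, hcol, Phi_apply]
          simp only [Fin.coe_castSucc, Fin.val_last]
          rw [phiEnt, if_pos rfl]
        have hsub : M.submatrix (Fin.last n).succAbove (Fin.last n).succAbove
            = (Phi p φ m s (n+1)).submatrix Fin.castSucc j'.succAbove := by
          rw [Fin.succAbove_last, hM, Matrix.submatrix_submatrix]
          ext a b
          simp only [Matrix.submatrix_apply, Function.comp_apply, Phi_apply,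
            Fin.coe_castSucc]
          congr 1
          by_cases hb : (b : ℕ) < (j : ℕ)
          · rw [Fin.succAbove_of_castSucc_lt j (Fin.castSucc b)
              (by rw [Fin.lt_def]; simpa using hb),
              Fin.succAbove_of_castSucc_lt j' b
              (by rw [Fin.lt_def]; simpa [hj'v] using hb)]
            simp
          · rw [Fin.succAbove_of_le_castSucc j (Fin.castSucc b)
              (by rw [Fin.le_def]; simp; omega),
              Fin.succAbove_of_le_castSucc j' b
              (by rw [Fin.le_def]; simp [hj'v]; omega)]
            simp
        rw [hEntry, hsub, ih j', hj'v]
        have h1 : ((-1:ℂ))^((Fin.last n : ℕ) + (Fin.last n : ℕ)) = 1 := by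
          rw [Fin.val_last, ← two_mul, pow_mul]
          norm_num
        rw [h1]
        have h2 : n + 1 - (j:ℕ) = (n - (j:ℕ)) + 1 := by omega
        rw [h2, pow_succ]
        ring
      · intro b _ hb
        have hbv : (b : ℕ) < n := by
          have := b.isLt
          have : (b : ℕ) ≠ n := fun h => hb (Fin.ext (by simp [h]))
          omega
        have : M b (Fin.last n) = 0 := by
          rw [hM, Matrix.submatrix_apply, hcol, Phi_apply]
          simp only [Fin.coe_castSucc, Fin.val_last]
          rw [phiEnt, if_neg (by omega), if_neg (by omega), if_neg (by omega)]
        rw [this, mul_zero, zero_mul]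

theorem stmt11 (p : ℕ) (hp : 1 ≤ p) (φ : ℕ → ℤ → ℂ) (s : ℤ)
    (m : ℕ) (hm1 : 1 ≤ m) (hmp : m ≤ p) (t : ℤ) (ht : s < t) :
    xi p φ m s t = ∑ i ∈ Finset.Icc 1 p, φ i t * xi p φ m s (t - (i : ℤ)) := by
  obtain ⟨n, hn⟩ : ∃ n, (t - s).toNat = n + 1 := ⟨(t - s).toNat - 1, by omega⟩
  have hts : t = s + (n : ℤ) + 1 := by omega
  set F : ℕ → ℂ := fun i => (if i ≤ p then φ i t else 0) * xi p φ m s (t - (i : ℤ))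
    with hF
  -- RHS = ∑_{Icc 1 p} F
  have hRHS : ∑ i ∈ Finset.Icc 1 p, φ i t * xi p φ m s (t - (i : ℤ))
      = ∑ i ∈ Finset.Icc 1 p, F i := by
    apply Finset.sum_congr rfl
    intro i hi
    simp only [hF]
    simp only [Finset.mem_Icc] at hi
    rw [if_pos hi.2]
  rw [hRHS]
  -- LHS expansion
  rw [xi, if_pos ht, hn]
  rw [Matrix.det_succ_row (Phi p φ m s (n+1)) (Fin.last n)]
  have step : ∀ j : Fin (n+1),
      (-1:ℂ)^((Fin.last n : ℕ) + (j:ℕ)) * Phi p φ m s (n+1) (Fin.last n) j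
        * ((Phi p φ m s (n+1)).submatrix (Fin.last n).succAbove j.succAbove).det
      = phiEnt p φ m s n (j:ℕ) * (Phi p φ m s (j:ℕ)).det := by
    intro j
    rw [Fin.succAbove_last, minor_det, Phi_apply, Fin.val_last]
    have hle : (j:ℕ) ≤ n := Nat.lt_succ_iff.mp j.isLt
    have hs2 : (-1:ℂ)^(n + (j:ℕ)) * (-1:ℂ)^(n - (j:ℕ)) = 1 := by
      rw [← pow_add, show n + (j:ℕ) + (n - (j:ℕ)) = 2*n by omega, pow_mul]
      norm_num
    linear_combination (phiEnt p φ m s n (j:ℕ) * (Phi p φ m s (j:ℕ)).det) * hs2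
  rw [Finset.sum_congr rfl fun j _ => step j]
  rw [Fin.sum_univ_eq_sum_range (fun j => phiEnt p φ m s n j * (Phi p φ m s j).det)
    (n+1)]
  rw [Finset.sum_range_succ']
  -- the j = 0 term
  have h0 : phiEnt p φ m s n 0 * (Phi p φ m s 0).det = F (n + m) := by
    rw [Matrix.det_fin_zero, mul_one, hF]
    have hxi : xi p φ m s (t - ((n + m : ℕ) : ℤ)) = 1 := by
      rw [xi, if_neg (by push_cast; omega), if_pos (by push_cast; omega)]
    simp only
    rw [hxi, mul_one, phiEnt, if_neg (by omega), if_pos rfl]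
    have : s + (n : ℤ) + 1 = t := hts.symm
    rw [this]
  rw [h0]
  -- the j ≥ 1 terms
  have hj : ∀ j ∈ Finset.range n,
      phiEnt p φ m s n (j+1) * (Phi p φ m s (j+1)).det = F (n - j) := by
    intro j hjr
    have hjn : j < n := Finset.mem_range.mp hjr
    have hxi : xi p φ m s (t - ((n - j : ℕ) : ℤ)) = (Phi p φ m s (j+1)).det := by
      have hto : (t - ((n - j : ℕ) : ℤ) - s).toNat = j + 1 := by omega
      rw [xi, if_pos (by omega : s < t - ((n - j : ℕ) : ℤ)), hto]
    simp only [hF]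
    rw [hxi, phiEnt, if_neg (by omega), if_neg (by omega), if_pos (by omega),
      show n - (j+1) + 1 = n - j by omega]
    have : s + (n : ℤ) + 1 = t := hts.symm
    rw [this]
  rw [Finset.sum_congr rfl hj]
  have hrefl : ∑ j ∈ Finset.range n, F (n - j) = ∑ j ∈ Finset.range n, F (j+1) := by
    rw [← Finset.sum_range_reflect (fun j => F (j+1)) n]
    apply Finset.sum_congr rfl
    intro j hjr
    have := Finset.mem_range.mp hjr
    congr 1
    omega
  rw [hrefl]
  -- now: ∑_{j∈range n} F (j+1) + F (n+m) = ∑_{Icc 1 p} F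
  have hIoc1 : ∑ j ∈ Finset.range n, F (j+1) = ∑ i ∈ Finset.Ioc 0 n, F i := by
    rw [show Finset.Ioc 0 n = Finset.Ico 1 (n+1) by ext x; simp; omega,
      Finset.sum_Ico_eq_sum_range]
    simp [add_comm]
  have hIoc2 : ∑ i ∈ Finset.Ioc n (n+p), F i = F (n+m) := by
    apply Finset.sum_eq_single_of_mem
    · simp only [Finset.mem_Ioc]
      omega
    · intro b hb hbne
      simp only [Finset.mem_Ioc] at hb
      have hxi : xi p φ m s (t - (b : ℤ)) = 0 := by
        rw [xi, if_neg (by omega), if_neg (by push_cast; omega)]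
      simp only [hF]
      rw [hxi, mul_zero]
  have hsplit : ∑ i ∈ Finset.Ioc 0 n, F i + ∑ i ∈ Finset.Ioc n (n+p), F i
      = ∑ i ∈ Finset.Ioc 0 (n+p), F i :=
    Finset.sum_Ioc_consecutive F (Nat.zero_le n) (Nat.le_add_right n p)
  have hshrink : ∑ i ∈ Finset.Ioc 0 (n+p), F i = ∑ i ∈ Finset.Ioc 0 p, F i := by
    symm
    apply Finset.sum_subset
    · intro x hx
      simp only [Finset.mem_Ioc] at hx ⊢
      omega
    · intro x hx hxn
      simp only [Finset.mem_Ioc] at hx hxn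
      simp only [hF]
      rw [if_neg (by omega), zero_mul]
  rw [hIoc1, ← hIoc2, hsplit, hshrink,
    show Finset.Icc 1 p = Finset.Ioc 0 p by ext x; simp; omega]
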